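/- For all n ≥ 1, the total number of up steps over all dispersed Dyck paths of length n is U(n) = (n·C(n,⌊n/2⌋) − 2^n + C(n,⌊n/2⌋))/2; equivalently 2·U(n) = (n+1)·C(n,⌊n/2⌋) − 2^n. -/

import Mathlib

inductive DStep | up | down | right
deriving DecidableEq, Repr

instance : Fintype DStep :=
  ⟨{.up, .down, .right}, fun x => by cases x <;> decide⟩

/-- Run a dispersed Dyck path from height `h`; `none` if an illegal step occurs,
otherwise the final height. Down steps require positive height; right steps require height 0. -/
def DStep.run : ℕ → List DStep → Option ℕ
  | h, [] => some h
  | h, .up :: l => DStep.run (h + 1) l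
  | h + 1, .down :: l => DStep.run h l
  | 0, .down :: _ => none
  | 0, .right :: l => DStep.run 0 l
  | _ + 1, .right :: _ => none

/-- A dispersed Dyck path: starts and ends at height 0, all steps legal. -/
def IsDDP (l : List DStep) : Prop := DStep.run 0 l = some 0

instance : DecidablePred IsDDP := fun l => by unfold IsDDP; infer_instance

/-- The finset of all dispersed Dyck paths of length `n`. -/
def DDPs (n : ℕ) : Finset (List.Vector DStep n) :=
  Finset.univ.filter (fun v => IsDDP v.toList)

/-- Number of dispersed Dyck paths of length `n`. -/
def dD (n : ℕ) : ℕ := (DDPs n).card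

/-- Total number of up steps over all DDPs of length `n`. -/
def U (n : ℕ) : ℕ := ∑ v ∈ DDPs n, v.toList.count DStep.up

/-- Total number of down steps over all DDPs of length `n`. -/
def D (n : ℕ) : ℕ := ∑ v ∈ DDPs n, v.toList.count DStep.down

/-- Total number of right steps over all DDPs of length `n`. -/
def R (n : ℕ) : ℕ := ∑ v ∈ DDPs n, v.toList.count DStep.right

/-- `i` is the position of a 1-ascent in `l`: an up step with no adjacent up step. -/
def IsOneAscentAt (l : List DStep) (i : ℕ) : Prop :=
  l[i]? = some .up ∧ l[i + 1]? ≠ some .up ∧ (i = 0 ∨ l[i - 1]? ≠ some .up)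

instance (l : List DStep) : DecidablePred (IsOneAscentAt l) := fun i => by
  unfold IsOneAscentAt; infer_instance

/-- Number of 1-ascents in `l`. -/
def oneAsc (l : List DStep) : ℕ :=
  ((Finset.range l.length).filter (IsOneAscentAt l)).card

/-- Total number of 1-ascents over all DDPs of length `n`. -/
def A (n : ℕ) : ℕ := ∑ v ∈ DDPs n, oneAsc v.toList

/-- Signed final height of a plain path (ignoring any right steps). -/
def psum : List DStep → ℤ
  | [] => 0
  | .up :: l => 1 + psum l
  | .down :: l => -1 + psum l
  | .right :: l => psum l


/-!
Since the up and down steps of a dispersed Dyck path balance, its length is twice the number of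
up steps plus the number of right steps, so `2 U(n) + R(n) = n dD(n)`. The other two quantities
are computed from the paths of length `n` that start at an arbitrary height `h` and end at `0`:
their number obeys Pascal's recurrence and equals `C(n, ⌊(n + h + 1)/2⌋)`, and the total number
of right steps over them plus the number of such paths from all heights `≤ h` is `2^n`, because
both sides satisfy the same recurrence in `n`. At `h = 0` this gives `dD(n) = C(n, ⌊n/2⌋)` and `R(n) = 2^n - dD(n)`.
-/

open Finset

namespace DStep

@[simp] lemma run_nil (h : ℕ) : run h [] = some h := by cases h <;> rfl
@[simp] lemma run_up_cons (h : ℕ) (l : List DStep) : run h (up :: l) = run (h + 1) l := by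
  cases h <;> rfl
@[simp] lemma run_succ_down_cons (h : ℕ) (l : List DStep) : run (h + 1) (down :: l) = run h l := rfl
@[simp] lemma run_zero_down_cons (l : List DStep) : run 0 (down :: l) = none := rfl
@[simp] lemma run_zero_right_cons (l : List DStep) : run 0 (right :: l) = run 0 l := rfl
@[simp] lemma run_succ_right_cons (h : ℕ) (l : List DStep) : run (h + 1) (right :: l) = none := rfl

lemma count_down_add_eq_of_run_eq_some {l : List DStep} {h k : ℕ} (hl : run h l = some k) :
    l.count down + k = l.count up + h := by
  induction l generalizing h with
  | nil => simp_all
  | cons s l ih =>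
    rcases s with _ | _ | _ <;> rcases h with _ | h <;>
      simp only [run_up_cons, run_succ_down_cons, run_zero_down_cons, run_zero_right_cons,
        run_succ_right_cons, reduceCtorEq] at hl <;> grind

lemma count_up_add_count_down_add_count_right (l : List DStep) :
    l.count up + l.count down + l.count right = l.length := by
  induction l with
  | nil => rfl
  | cons s l ih => cases s <;> grind

lemma sum_univ {M : Type*} [AddCommMonoid M] (g : DStep → M) :
    ∑ s, g s = g up + g down + g right := by
  rw [show (univ : Finset DStep) = {up, down, right} by decide]
  simp [add_assoc]

end DStep

section Vector

variable {α M : Type*} [Fintype α] [AddCommMonoid M]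

def List.Vector.consEquiv (n : ℕ) : α × List.Vector α n ≃ List.Vector α (n + 1) where
  toFun p := p.1 ::ᵥ p.2
  invFun v := (v.head, v.tail)
  left_inv p := by simp
  right_inv v := by simp

lemma List.Vector.sum_univ_succ {n : ℕ} (f : List.Vector α (n + 1) → M) :
    ∑ v, f v = ∑ a, ∑ v : List.Vector α n, f (a ::ᵥ v) := by
  rw [← (List.Vector.consEquiv n).sum_comp, Fintype.sum_prod_type]
  rfl

end Vector

/-- Suffixes of dispersed Dyck paths that start at height `h`. -/
def DDPsFrom (n h : ℕ) : Finset (List.Vector DStep n) :=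
  univ.filter fun v => DStep.run h v.toList = some 0

lemma DDPsFrom_zero_right (n : ℕ) : DDPsFrom n 0 = DDPs n := rfl

section Sums

variable {M : Type*} [AddCommMonoid M] (f : List DStep → M)

lemma sum_DDPsFrom_zero_left (h : ℕ) :
    ∑ v ∈ DDPsFrom 0 h, f v.toList = if h = 0 then f [] else 0 := by
  rw [DDPsFrom, sum_filter, Fintype.sum_eq_single .nil fun v hv => absurd v.eq_nil hv]
  simp

lemma sum_DDPsFrom_succ_zero (n : ℕ) :
    ∑ v ∈ DDPsFrom (n + 1) 0, f v.toList =
      ∑ v ∈ DDPsFrom n 1, f (.up :: v.toList) + ∑ v ∈ DDPsFrom n 0, f (.right :: v.toList) := by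
  simp only [DDPsFrom, sum_filter, List.Vector.sum_univ_succ, List.Vector.toList_cons, DStep.sum_univ,
    DStep.run_up_cons, zero_add, DStep.run_zero_down_cons, reduceCtorEq, ↓reduceIte, sum_const_zero,
    add_zero, DStep.run_zero_right_cons]
  rfl

lemma sum_DDPsFrom_succ_succ (n h : ℕ) :
    ∑ v ∈ DDPsFrom (n + 1) (h + 1), f v.toList =
      ∑ v ∈ DDPsFrom n (h + 2), f (.up :: v.toList) + ∑ v ∈ DDPsFrom n h, f (.down :: v.toList) := by
  simp only [DDPsFrom, sum_filter, List.Vector.sum_univ_succ, List.Vector.toList_cons, DStep.sum_univ,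
    DStep.run_up_cons, DStep.run_succ_down_cons, DStep.run_succ_right_cons, reduceCtorEq, ↓reduceIte,
    sum_const_zero, add_zero]
  rfl

end Sums

lemma card_DDPsFrom_zero_left (h : ℕ) : #(DDPsFrom 0 h) = if h = 0 then 1 else 0 := by
  simpa only [← card_eq_sum_ones] using sum_DDPsFrom_zero_left (fun _ => (1 : ℕ)) h

lemma card_DDPsFrom_succ_zero (n : ℕ) :
    #(DDPsFrom (n + 1) 0) = #(DDPsFrom n 1) + #(DDPsFrom n 0) := by
  simpa only [← card_eq_sum_ones] using sum_DDPsFrom_succ_zero (fun _ => (1 : ℕ)) n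

lemma card_DDPsFrom_succ_succ (n h : ℕ) :
    #(DDPsFrom (n + 1) (h + 1)) = #(DDPsFrom n (h + 2)) + #(DDPsFrom n h) := by
  simpa only [← card_eq_sum_ones] using sum_DDPsFrom_succ_succ (fun _ => (1 : ℕ)) n h

lemma Nat.choose_succ_div_two (n : ℕ) : n.choose ((n + 1) / 2) = n.choose (n / 2) := by
  rw [← Nat.choose_symm (by omega : (n + 1) / 2 ≤ n), show n - (n + 1) / 2 = n / 2 by omega]

lemma card_DDPsFrom (n h : ℕ) : #(DDPsFrom n h) = n.choose ((n + h + 1) / 2) := by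
  induction n generalizing h with
  | zero =>
    rcases h with _ | h
    · rfl
    · rw [card_DDPsFrom_zero_left, Nat.choose_eq_zero_of_lt (by omega), if_neg h.succ_ne_zero]
  | succ n ih =>
    rcases h with _ | h
    · rw [card_DDPsFrom_succ_zero, ih, ih, Nat.choose_succ_div_two,
        show (n + 1 + 0 + 1) / 2 = n / 2 + 1 by omega, Nat.choose_succ_succ',
        add_comm]
    · rw [card_DDPsFrom_succ_succ, ih, ih, show (n + 1 + (h + 1) + 1) / 2 = (n + h + 1) / 2 + 1 by omega,
        show (n + (h + 2) + 1) / 2 = (n + h + 1) / 2 + 1 by omega, Nat.choose_succ_succ', add_comm]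

lemma sum_range_card_DDPsFrom_succ (n h : ℕ) :
    ∑ j ∈ range (h + 2), #(DDPsFrom (n + 1) j) =
      ∑ j ∈ range (h + 1), #(DDPsFrom n j) + ∑ j ∈ range (h + 3), #(DDPsFrom n j) := by
  rw [sum_range_succ', card_DDPsFrom_succ_zero]
  simp_rw [card_DDPsFrom_succ_succ]
  rw [sum_add_distrib, sum_range_succ' _ (h + 2), sum_range_succ' _ (h + 1)]
  ring

def rightSteps (n h : ℕ) : ℕ := ∑ v ∈ DDPsFrom n h, v.toList.count .right

lemma rightSteps_zero_left (h : ℕ) : rightSteps 0 h = 0 := by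
  simp [rightSteps]

lemma rightSteps_succ_zero (n : ℕ) :
    rightSteps (n + 1) 0 = rightSteps n 1 + (rightSteps n 0 + #(DDPsFrom n 0)) := by
  simp [rightSteps, sum_DDPsFrom_succ_zero, sum_add_distrib]

lemma rightSteps_succ_succ (n h : ℕ) :
    rightSteps (n + 1) (h + 1) = rightSteps n (h + 2) + rightSteps n h := by
  simp [rightSteps, sum_DDPsFrom_succ_succ]

lemma rightSteps_add_sum_range_card_DDPsFrom (n h : ℕ) :
    rightSteps n h + ∑ j ∈ range (h + 1), #(DDPsFrom n j) = 2 ^ n := by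
  induction n generalizing h with
  | zero => simp [rightSteps_zero_left, card_DDPsFrom_zero_left]
  | succ n ih =>
    rcases h with _ | h
    · have h0 := ih 0
      have h1 := ih 1
      rw [sum_range_one] at h0 ⊢
      rw [sum_range_succ, sum_range_one] at h1
      rw [rightSteps_succ_zero, card_DDPsFrom_succ_zero, pow_succ]
      omega
    · have := ih h
      have : rightSteps n (h + 2) + ∑ j ∈ range (h + 3), #(DDPsFrom n j) = 2 ^ n := ih (h + 2)
      rw [rightSteps_succ_succ, sum_range_card_DDPsFrom_succ, pow_succ]
      omega

lemma two_mul_U_add_R (n : ℕ) : 2 * U n + R n = n * dD n := by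
  rw [U, R, dD, card_eq_sum_ones, mul_sum, mul_sum, ← sum_add_distrib]
  refine sum_congr rfl fun v hv => ?_
  have hud := DStep.count_down_add_eq_of_run_eq_some (mem_filter.1 hv).2
  have hlen := DStep.count_up_add_count_down_add_count_right v.toList
  rw [v.toList_length] at hlen
  omega

lemma dD_eq_choose (n : ℕ) : dD n = n.choose (n / 2) := by
  rw [dD, ← DDPsFrom_zero_right, card_DDPsFrom, add_zero, Nat.choose_succ_div_two]

lemma R_add_dD (n : ℕ) : R n + dD n = 2 ^ n := by
  have := rightSteps_add_sum_range_card_DDPsFrom n 0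
  rwa [sum_range_one] at this

theorem up_closed_general (n : ℕ) :
    2 * U n + 2 ^ n = (n + 1) * n.choose (n / 2) := by
  have h1 := two_mul_U_add_R n
  have h2 := R_add_dD n
  rw [dD_eq_choose] at h1 h2
  linarith

/-- For `n ≥ 1`, `2·U(n) = (n+1)·C(n,⌊n/2⌋) − 2^n`, i.e. the total number of up steps
over all DDPs of length `n` is `((n+1)·C(n,⌊n/2⌋) − 2^n)/2`. -/
theorem up_closed (n : ℕ) (hn : 1 ≤ n) :
    2 * U n + 2 ^ n = (n + 1) * n.choose (n / 2) :=
  up_closed_general n
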